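/- arXiv:2503.24329 — 2 statements merged into one kernel-verified Lean document; each statement's English description precedes it below -/
import Mathlib

section
/- Let f(X) = ‖AX − XB‖_F², let X* = argmin over permutation matrices of f, and suppose X^{(k)} ∈ D_n satisfies ‖X^{(k)} − X*‖_F ≤ a for some a ∈ [0, 1/2). If ε > 0 and λ ≥ 2(a+ε)(1−a+ε)L/(1−2a) where L is a Lipschitz constant of f on D_n, then for every X ∈ D_n, f(X) + λ·Σ_{i,j} X_{ij}/(X^{(k)}_{ij}+ε) ≥ f(X*) + λ·Σ_{i,j} X*_{ij}/(X^{(k)}_{ij}+ε). -/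
open Finset Matrix

/-- Frobenius norm of a square real matrix. -/
noncomputable def frob {n : ℕ} (M : Matrix (Fin n) (Fin n) ℝ) : ℝ :=
  Real.sqrt (∑ i, ∑ j, (M i j) ^ 2)

/-- `X` is doubly stochastic. -/
def IsDS {n : ℕ} (X : Matrix (Fin n) (Fin n) ℝ) : Prop :=
  (∀ i j, 0 ≤ X i j) ∧ (∀ i, ∑ j, X i j = 1) ∧ (∀ j, ∑ i, X i j = 1)

/-- `X` is a permutation matrix. -/
def IsPermMat {n : ℕ} (X : Matrix (Fin n) (Fin n) ℝ) : Prop :=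
  (∀ i j, X i j = 0 ∨ X i j = 1) ∧ (∀ i, ∑ j, X i j = 1) ∧ (∀ j, ∑ i, X i j = 1)

/-!
Write `D = X - X*`. Since `X` and `X*` have the same total mass, the positive and the negative
parts of `D` each carry half of `‖D‖₁`. The positive part lives where `X*` vanishes, hence where
`X⁽ᵏ⁾ ≤ a` and the weight `1 / (X⁽ᵏ⁾ + ε)` is at least `1 / (a + ε)`; the negative part lives where
`X* = 1`, where `X⁽ᵏ⁾ ≥ 1 - a` and the weight is at most `1 / (1 - a + ε)`. So the penalty grows by
at least `(1 - 2a) / (2 (a + ε) (1 - a + ε)) · ‖D‖₁`, and the choice of `λ` makes this dominate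
`L ‖D‖₁ ≥ L ‖D‖_F ≥ f(X*) - f(X)`.
-/

section WeightedDeviation

variable {ι : Type*} [Fintype ι]

lemma sum_negPart_eq_sum_posPart {d : ι → ℝ} (h : ∑ i, d i = 0) :
    ∑ i, (d i)⁻ = ∑ i, (d i)⁺ := by
  have hsub : ∑ i, (d i)⁺ - ∑ i, (d i)⁻ = 0 := by
    simp only [← Finset.sum_sub_distrib, posPart_sub_negPart, h]
  linarith

lemma sum_posPart_eq_half_sum_abs {d : ι → ℝ} (h : ∑ i, d i = 0) :
    ∑ i, (d i)⁺ = (∑ i, |d i|) / 2 := by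
  have hadd : ∑ i, (d i)⁺ + ∑ i, (d i)⁻ = ∑ i, |d i| := by
    simp only [← Finset.sum_add_distrib, posPart_add_negPart]
  linarith [sum_negPart_eq_sum_posPart h]

lemma half_sub_mul_sum_abs_le_sum_mul {x p w : ι → ℝ} {α β : ℝ}
    (hp : ∀ i, p i = 0 ∨ p i = 1) (hx0 : ∀ i, 0 ≤ x i) (hx1 : ∀ i, x i ≤ 1)
    (hsum : ∑ i, x i = ∑ i, p i)
    (hw0 : ∀ i, p i = 0 → α ≤ w i) (hw1 : ∀ i, p i = 1 → w i ≤ β) :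
    (α - β) / 2 * ∑ i, |x i - p i| ≤ ∑ i, (x i - p i) * w i := by
  have hd : ∑ i, (x i - p i) = 0 := by rw [Finset.sum_sub_distrib, hsum, sub_self]
  have hentry : ∀ i, α * (x i - p i)⁺ - β * (x i - p i)⁻ ≤ (x i - p i) * w i := by
    intro i
    rcases hp i with h | h
    · have hnn : 0 ≤ x i - p i := by rw [h, sub_zero]; exact hx0 i
      rw [posPart_eq_self.2 hnn, negPart_eq_zero.2 hnn]
      linarith [mul_le_mul_of_nonneg_left (hw0 i h) hnn]
    · have hnp : x i - p i ≤ 0 := by rw [h]; linarith [hx1 i]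
      rw [posPart_eq_zero.2 hnp, negPart_eq_neg.2 hnp]
      linarith [mul_le_mul_of_nonpos_left (hw1 i h) hnp]
  calc (α - β) / 2 * ∑ i, |x i - p i|
      = α * ∑ i, (x i - p i)⁺ - β * ∑ i, (x i - p i)⁻ := by
        rw [sum_negPart_eq_sum_posPart hd, sum_posPart_eq_half_sum_abs hd]; ring
    _ = ∑ i, (α * (x i - p i)⁺ - β * (x i - p i)⁻) := by
        rw [Finset.sum_sub_distrib, Finset.mul_sum, Finset.mul_sum]
    _ ≤ ∑ i, (x i - p i) * w i := Finset.sum_le_sum fun i _ => hentry i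

end WeightedDeviation

section Frobenius

variable {n : ℕ}

lemma abs_apply_le_frob (M : Matrix (Fin n) (Fin n) ℝ) (i j : Fin n) : |M i j| ≤ frob M := by
  rw [frob, ← Real.sqrt_sq_eq_abs]
  apply Real.sqrt_le_sqrt
  calc M i j ^ 2 ≤ ∑ j', M i j' ^ 2 :=
        Finset.single_le_sum (f := fun j' => M i j' ^ 2) (fun _ _ => sq_nonneg _)
          (Finset.mem_univ j)
    _ ≤ ∑ i', ∑ j', M i' j' ^ 2 :=
        Finset.single_le_sum (f := fun i' => ∑ j', M i' j' ^ 2)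
          (fun _ _ => Finset.sum_nonneg fun _ _ => sq_nonneg _) (Finset.mem_univ i)

lemma frob_pos {M : Matrix (Fin n) (Fin n) ℝ} (hM : M ≠ 0) : 0 < frob M := by
  obtain ⟨i, j, hij⟩ : ∃ i j, M i j ≠ 0 := by
    by_contra! h
    exact hM (Matrix.ext h)
  exact (abs_pos.2 hij).trans_le (abs_apply_le_frob M i j)

lemma frob_le_sum_abs (M : Matrix (Fin n) (Fin n) ℝ) : frob M ≤ ∑ i, ∑ j, |M i j| := by
  rw [frob, Real.sqrt_le_left (by positivity)]
  simp only [← Fintype.sum_prod_type']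
  calc ∑ x : Fin n × Fin n, M x.1 x.2 ^ 2 = ∑ x : Fin n × Fin n, |M x.1 x.2| ^ 2 := by
        simp only [sq_abs]
    _ ≤ (∑ x : Fin n × Fin n, |M x.1 x.2|) ^ 2 :=
        Finset.sum_sq_le_sq_sum_of_nonneg fun _ _ => abs_nonneg _

end Frobenius

lemma IsPermMat.isDS {n : ℕ} {P : Matrix (Fin n) (Fin n) ℝ} (hP : IsPermMat P) : IsDS P :=
  ⟨fun i j => (hP.1 i j).elim (fun h => h.ge) (fun h => h ▸ zero_le_one), hP.2⟩

lemma IsDS.apply_le_one {n : ℕ} {X : Matrix (Fin n) (Fin n) ℝ} (hX : IsDS X) (i j : Fin n) :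
    X i j ≤ 1 :=
  hX.2.1 i ▸ Finset.single_le_sum (fun j' _ => hX.1 i j') (Finset.mem_univ j)

lemma IsDS.sum_sum_eq {n : ℕ} {X Y : Matrix (Fin n) (Fin n) ℝ} (hX : IsDS X) (hY : IsDS Y) :
    ∑ i, ∑ j, X i j = ∑ i, ∑ j, Y i j := by
  simp only [hX.2.1, hY.2.1]

/-- Half the gap between the smallest weight `1 / (a + ε)` off the support of `X*` and the largest
weight `1 / (1 - a + ε)` on it. -/
noncomputable def weightGap (a ε : ℝ) : ℝ := (1 / (a + ε) - 1 / (1 - a + ε)) / 2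

lemma weightGap_pos {a ε : ℝ} (ha0 : 0 ≤ a) (ha : a < 1 / 2) (hε : 0 < ε) : 0 < weightGap a ε := by
  have : 1 / (1 - a + ε) < 1 / (a + ε) := one_div_lt_one_div_of_lt (by linarith) (by linarith)
  unfold weightGap
  linarith

lemma le_mul_weightGap {a ε L lam : ℝ} (ha0 : 0 ≤ a) (ha : a < 1 / 2) (hε : 0 < ε)
    (hlam : 2 * (a + ε) * (1 - a + ε) * L / (1 - 2 * a) ≤ lam) : L ≤ lam * weightGap a ε := by
  have h1 : 0 < a + ε := by linarith
  have h2 : 0 < 1 - a + ε := by linarith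
  rw [div_le_iff₀ (by linarith)] at hlam
  unfold weightGap
  field_simp
  nlinarith

lemma reweighted_sum_sub_ge_of_frob_le {n : ℕ} {X P K : Matrix (Fin n) (Fin n) ℝ} {a ε : ℝ}
    (hX : IsDS X) (hP : IsPermMat P) (hK : ∀ i j, 0 ≤ K i j) (hKP : frob (K - P) ≤ a)
    (ha : a < 1 / 2) (hε : 0 < ε) :
    weightGap a ε * ∑ i, ∑ j, |X i j - P i j| ≤
      ∑ i, ∑ j, X i j / (K i j + ε) - ∑ i, ∑ j, P i j / (K i j + ε) := by
  have hKP' : ∀ i j, |K i j - P i j| ≤ a := fun i j =>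
    (abs_apply_le_frob (K - P) i j).trans hKP
  have hpos : ∀ i j, 0 < K i j + ε := fun i j => by linarith [hK i j]
  have hw0 : ∀ x : Fin n × Fin n, P x.1 x.2 = 0 → 1 / (a + ε) ≤ 1 / (K x.1 x.2 + ε) := by
    intro ⟨i, j⟩ h
    have := (abs_le.1 (hKP' i j)).2
    rw [h] at this
    exact one_div_le_one_div_of_le (hpos i j) (by linarith)
  have hw1 : ∀ x : Fin n × Fin n, P x.1 x.2 = 1 → 1 / (K x.1 x.2 + ε) ≤ 1 / (1 - a + ε) := by
    intro ⟨i, j⟩ h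
    have := (abs_le.1 (hKP' i j)).1
    rw [h] at this
    exact one_div_le_one_div_of_le (by linarith) (by linarith)
  have hmass : ∑ x : Fin n × Fin n, X x.1 x.2 = ∑ x : Fin n × Fin n, P x.1 x.2 :=
    (Fintype.sum_prod_type' (fun i j => X i j)).trans
      ((hX.sum_sum_eq hP.isDS).trans (Fintype.sum_prod_type' (fun i j => P i j)).symm)
  have key := half_sub_mul_sum_abs_le_sum_mul (fun x => hP.1 x.1 x.2) (fun x => hX.1 x.1 x.2)
    (fun x => hX.apply_le_one x.1 x.2) hmass hw0 hw1
  have hdiff : ∑ i, ∑ j, X i j / (K i j + ε) - ∑ i, ∑ j, P i j / (K i j + ε) =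
      ∑ i, ∑ j, (X i j - P i j) * (1 / (K i j + ε)) := by
    simp only [← Finset.sum_sub_distrib, mul_one_div, sub_div]
  rw [hdiff, ← Fintype.sum_prod_type' (fun i j => |X i j - P i j|),
    ← Fintype.sum_prod_type' (fun i j => (X i j - P i j) * (1 / (K i j + ε)))]
  exact key

theorem stmt_8_general {n : ℕ} (A B : Matrix (Fin n) (Fin n) ℝ)
    (Xstar Xk : Matrix (Fin n) (Fin n) ℝ) (hXs : IsPermMat Xstar)
    (hXk : IsDS Xk) (a ε L lam : ℝ) (ha0 : 0 ≤ a) (ha : a < 1 / 2) (hε : 0 < ε)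
    (hclose : frob (Xk - Xstar) ≤ a)
    (hL : ∀ X Y : Matrix (Fin n) (Fin n) ℝ, IsDS X → IsDS Y →
      |frob (A * X - X * B) ^ 2 - frob (A * Y - Y * B) ^ 2| ≤ L * frob (X - Y))
    (hlam : 2 * (a + ε) * (1 - a + ε) * L / (1 - 2 * a) ≤ lam) :
    ∀ X : Matrix (Fin n) (Fin n) ℝ, IsDS X →
      frob (A * Xstar - Xstar * B) ^ 2 + lam * ∑ i, ∑ j, Xstar i j / (Xk i j + ε) ≤
        frob (A * X - X * B) ^ 2 + lam * ∑ i, ∑ j, X i j / (Xk i j + ε) := by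
  intro X hX
  -- `L ≥ 0` is forced only by a pair of distinct points.
  rcases eq_or_ne X Xstar with rfl | hne
  · exact le_rfl
  have hLip := abs_le.1 (hL X Xstar hX hXs.isDS)
  have hL0 : 0 ≤ L :=
    nonneg_of_mul_nonneg_left (by linarith) (frob_pos (sub_ne_zero.2 hne))
  have hcoef := le_mul_weightGap ha0 ha hε hlam
  have hlam0 : 0 ≤ lam := nonneg_of_mul_nonneg_left (hL0.trans hcoef) (weightGap_pos ha0 ha hε)
  have hpen := reweighted_sum_sub_ge_of_frob_le hX hXs hXk.1 hclose ha hε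
  suffices frob (A * Xstar - Xstar * B) ^ 2 - frob (A * X - X * B) ^ 2 ≤
      lam * (∑ i, ∑ j, X i j / (Xk i j + ε) - ∑ i, ∑ j, Xstar i j / (Xk i j + ε)) by
    linarith
  calc frob (A * Xstar - Xstar * B) ^ 2 - frob (A * X - X * B) ^ 2
      ≤ L * frob (X - Xstar) := by linarith
    _ ≤ L * ∑ i, ∑ j, |X i j - Xstar i j| :=
        mul_le_mul_of_nonneg_left (frob_le_sum_abs _) hL0
    _ ≤ lam * weightGap a ε * ∑ i, ∑ j, |X i j - Xstar i j| :=
        mul_le_mul_of_nonneg_right hcoef (by positivity)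
    _ ≤ lam * (∑ i, ∑ j, X i j / (Xk i j + ε) - ∑ i, ∑ j, Xstar i j / (Xk i j + ε)) := by
        rw [mul_assoc]; exact mul_le_mul_of_nonneg_left hpen hlam0

theorem stmt_8 {n : ℕ} (A B : Matrix (Fin n) (Fin n) ℝ)
    (Xstar Xk : Matrix (Fin n) (Fin n) ℝ) (hXs : IsPermMat Xstar)
    (hmin : ∀ P : Matrix (Fin n) (Fin n) ℝ, IsPermMat P →
      frob (A * Xstar - Xstar * B) ^ 2 ≤ frob (A * P - P * B) ^ 2)
    (hXk : IsDS Xk) (a ε L lam : ℝ) (ha0 : 0 ≤ a) (ha : a < 1 / 2) (hε : 0 < ε)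
    (hclose : frob (Xk - Xstar) ≤ a)
    (hL : ∀ X Y : Matrix (Fin n) (Fin n) ℝ, IsDS X → IsDS Y →
      |frob (A * X - X * B) ^ 2 - frob (A * Y - Y * B) ^ 2| ≤ L * frob (X - Y))
    (hlam : 2 * (a + ε) * (1 - a + ε) * L / (1 - 2 * a) ≤ lam) :
    ∀ X : Matrix (Fin n) (Fin n) ℝ, IsDS X →
      frob (A * Xstar - Xstar * B) ^ 2 + lam * ∑ i, ∑ j, Xstar i j / (Xk i j + ε) ≤
        frob (A * X - X * B) ^ 2 + lam * ∑ i, ∑ j, X i j / (Xk i j + ε) :=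
  stmt_8_general A B Xstar Xk hXs hXk a ε L lam ha0 ha hε hclose hL hlam
end

section
/- The dual function θ(y, z) = (1/2)‖max(C + y𝐞ᵀ + 𝐞zᵀ, 0)‖_F² − ⟨y + z, 𝐞⟩ is differentiable, with gradient given by ∇_y θ = max(C + y𝐞ᵀ + 𝐞zᵀ, 0)𝐞 − 𝐞 and ∇_z θ = max(C + y𝐞ᵀ + 𝐞zᵀ, 0)ᵀ𝐞 − 𝐞. -/
/-!
The map `x ↦ max x 0 ^ 2` is differentiable with derivative `2 * max x 0`: away from `0` it is
locally `0` or `x ^ 2`, and at `0` the derivative extends continuously. Hence `θ` is a sum of such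
terms composed with the affine maps `p ↦ C i j + p.1 i + p.2 j`, minus a linear form, and the chain
rule gives its derivative; collecting the coefficients of `u i` and `v j` yields row and column
sums of `max (C + y𝐞ᵀ + 𝐞zᵀ) 0`.
-/

open Finset Matrix

lemma frob_sq {n : ℕ} (M : Matrix (Fin n) (Fin n) ℝ) : frob M ^ 2 = ∑ i, ∑ j, M i j ^ 2 :=
  Real.sq_sqrt <| sum_nonneg fun _ _ => sum_nonneg fun _ _ => sq_nonneg _

lemma hasDerivAt_max_zero_sq_of_ne {t : ℝ} (ht : t ≠ 0) :
    HasDerivAt (fun x : ℝ => max x 0 ^ 2) (2 * max t 0) t := by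
  rcases ht.lt_or_gt with ht | ht
  · have hzero : (fun x : ℝ => max x 0 ^ 2) =ᶠ[nhds t] fun _ => 0 := by
      filter_upwards [eventually_lt_nhds ht] with x hx
      simp [max_eq_right hx.le]
    simpa [max_eq_right ht.le] using (hasDerivAt_const t (0 : ℝ)).congr_of_eventuallyEq hzero
  · have hsq : (fun x : ℝ => max x 0 ^ 2) =ᶠ[nhds t] fun x => x ^ 2 := by
      filter_upwards [eventually_gt_nhds ht] with x hx
      simp [max_eq_left hx.le]
    simpa [max_eq_left ht.le] using (hasDerivAt_pow 2 t).congr_of_eventuallyEq hsq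

lemma hasDerivAt_max_zero_sq (t : ℝ) :
    HasDerivAt (fun x : ℝ => max x 0 ^ 2) (2 * max t 0) t :=
  hasDerivAt_of_hasDerivAt_of_ne' (fun _ hx => hasDerivAt_max_zero_sq_of_ne hx)
    (by fun_prop) (by fun_prop) t

section
variable {E : Type*} [NormedAddCommGroup E] [NormedSpace ℝ E]

lemma HasFDerivAt.max_zero_sq {g : E → ℝ} {g' : E →L[ℝ] ℝ} {x : E} (hg : HasFDerivAt g g' x) :
    HasFDerivAt (fun p => max (g p) 0 ^ 2) ((2 * max (g x) 0) • g') x :=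
  (hasDerivAt_max_zero_sq (g x)).comp_hasFDerivAt x hg
end

section
variable {ι κ : Type*}

def rowColCLM (i : ι) (j : κ) : (ι → ℝ) × (κ → ℝ) →L[ℝ] ℝ :=
  (ContinuousLinearMap.proj i).comp (ContinuousLinearMap.fst ℝ (ι → ℝ) (κ → ℝ)) +
    (ContinuousLinearMap.proj j).comp (ContinuousLinearMap.snd ℝ (ι → ℝ) (κ → ℝ))

@[simp] lemma rowColCLM_apply (i : ι) (j : κ) (p : (ι → ℝ) × (κ → ℝ)) :
    rowColCLM i j p = p.1 i + p.2 j := rfl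

lemma hasFDerivAt_sum_max_zero_sq [Fintype ι] [Fintype κ] (C : Matrix ι κ ℝ) (y : ι → ℝ)
    (z : κ → ℝ) :
    HasFDerivAt (fun p : (ι → ℝ) × (κ → ℝ) => ∑ i, ∑ j, max (C i j + p.1 i + p.2 j) 0 ^ 2)
      (∑ i, ∑ j, (2 * max (C i j + y i + z j) 0) • rowColCLM i j) (y, z) :=
  HasFDerivAt.fun_sum fun i _ => HasFDerivAt.fun_sum fun j _ => by
    simpa only [rowColCLM_apply, add_assoc] using
      ((rowColCLM i j).hasFDerivAt.const_add (C i j) (x := (y, z))).max_zero_sq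

lemma sum_sum_mul_add [Fintype ι] [Fintype κ] (m : ι → κ → ℝ) (u : ι → ℝ) (v : κ → ℝ) :
    ∑ i, ∑ j, m i j * (u i + v j) = ∑ i, (∑ j, m i j) * u i + ∑ j, (∑ i, m i j) * v j := by
  simp only [mul_add, sum_add_distrib, sum_mul]
  rw [sum_comm (f := fun i j => m i j * v j)]
end

theorem stmt_18 {n : ℕ} (C : Matrix (Fin n) (Fin n) ℝ) (y z : Fin n → ℝ) :
    DifferentiableAt ℝ
      (fun p : (Fin n → ℝ) × (Fin n → ℝ) =>
        (1 / 2) * frob (Matrix.of fun i j => max (C i j + p.1 i + p.2 j) 0) ^ 2 -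
          ∑ i, (p.1 i + p.2 i)) (y, z) ∧
    ∀ u v : Fin n → ℝ,
      fderiv ℝ
        (fun p : (Fin n → ℝ) × (Fin n → ℝ) =>
          (1 / 2) * frob (Matrix.of fun i j => max (C i j + p.1 i + p.2 j) 0) ^ 2 -
            ∑ i, (p.1 i + p.2 i)) (y, z) (u, v) =
        (∑ i, ((∑ j, max (C i j + y i + z j) 0) - 1) * u i) +
          ∑ j, ((∑ i, max (C i j + y i + z j) 0) - 1) * v j := by
  simp only [frob_sq, Matrix.of_apply]
  have hlin : HasFDerivAt (fun p : (Fin n → ℝ) × (Fin n → ℝ) => ∑ i, (p.1 i + p.2 i))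
      (∑ i, rowColCLM i i) (y, z) :=
    HasFDerivAt.fun_sum fun i _ => (rowColCLM i i).hasFDerivAt
  have hθ := ((hasFDerivAt_sum_max_zero_sq C y z).const_mul (1 / 2 : ℝ)).fun_sub hlin
  refine ⟨hθ.differentiableAt, fun u v => ?_⟩
  rw [hθ.fderiv]
  simp only [_root_.sub_apply, _root_.smul_apply, FunLike.coe_sum, Finset.sum_apply,
    rowColCLM_apply, smul_eq_mul]
  simp only [mul_assoc, ← mul_sum, one_div, inv_mul_cancel_left₀ (two_ne_zero (α := ℝ)),
    sum_sum_mul_add, sub_mul, one_mul, sum_sub_distrib, sum_add_distrib]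
  ring
end
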